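/- arXiv:cs/0009002 — 2 statements merged into one kernel-verified Lean document; each statement's English description precedes it below -/
import Mathlib

section
/- Let G be a finite group, H a subgroup of G, and h ∈ G. Then ‖(|H⟩ − |Hh⟩)/2‖² = 0 if h ∈ H, and ‖(|H⟩ − |Hh⟩)/2‖² = 1/2 if h ∉ H. (This is the acceptance probability of the final measurement of the verification procedure when the certificate is the uniform superposition |H⟩.) -/
/-!
`|H⟩` and `|Hh⟩` are unit vectors. If `h ∈ H` the two cosets coincide and the difference
vanishes; otherwise `Hh` is disjoint from `H`, so the vectors are orthogonal and
`‖|H⟩ - |Hh⟩‖² = 1 + 1 = 2`, which the factor `1/2` turns into `1/2`.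
-/

/-- The uniform superposition `|S⟩ = |S|^{-1/2} ∑_{s ∈ S} e_s` over a finite
subset `S` of `G`, as a vector in `EuclideanSpace ℂ G`. -/
noncomputable def uniformSuperposition {G : Type*} [Fintype G] [DecidableEq G]
    (S : Finset G) : EuclideanSpace ℂ G :=
  WithLp.toLp 2 (fun x => if x ∈ S then (((Real.sqrt S.card)⁻¹ : ℝ) : ℂ) else 0)

open Finset

section

variable {G : Type*} [Fintype G] [DecidableEq G]

lemma uniformSuperposition_apply (S : Finset G) (x : G) :
    uniformSuperposition S x = if x ∈ S then (((√(#S : ℝ))⁻¹ : ℝ) : ℂ) else 0 := rfl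

lemma inner_uniformSuperposition (S T : Finset G) :
    inner ℂ (uniformSuperposition S) (uniformSuperposition T) =
      ((#(S ∩ T) / (√(#S : ℝ) * √(#T : ℝ)) : ℝ) : ℂ) := by
  have hterm : ∀ x, inner ℂ (uniformSuperposition S x) (uniformSuperposition T x) =
      if x ∈ S ∩ T then (((√(#S : ℝ))⁻¹ * (√(#T : ℝ))⁻¹ : ℝ) : ℂ) else 0 := by
    intro x
    by_cases hS : x ∈ S <;> by_cases hT : x ∈ T <;>
      simp [uniformSuperposition_apply, hS, hT, mul_comm]
  rw [PiLp.inner_apply, sum_congr rfl fun x _ => hterm x, sum_ite_mem,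
    univ_inter, sum_const, nsmul_eq_mul]
  push_cast
  ring

lemma norm_uniformSuperposition {S : Finset G} (hS : S.Nonempty) :
    ‖uniformSuperposition S‖ = 1 := by
  have hS' : (0 : ℝ) < #S := by exact_mod_cast hS.card_pos
  rw [norm_eq_sqrt_re_inner (𝕜 := ℂ), inner_uniformSuperposition, inter_self,
    Real.mul_self_sqrt hS'.le, div_self hS'.ne']
  simp

lemma norm_sq_uniformSuperposition_sub_of_disjoint {S T : Finset G} (hS : S.Nonempty)
    (hT : T.Nonempty) (hST : Disjoint S T) :
    ‖uniformSuperposition S - uniformSuperposition T‖ ^ 2 = 2 := by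
  rw [@norm_sub_sq ℂ, norm_uniformSuperposition hS, norm_uniformSuperposition hT,
    inner_uniformSuperposition, disjoint_iff_inter_eq_empty.mp hST]
  norm_num

end

namespace Subgroup

variable {G : Type*} [Group G] [Finite G] [DecidableEq G] (H : Subgroup G) {h : G}

lemma toFinset_image_mul_right_of_mem (hh : h ∈ H) :
    (H : Set G).toFinite.toFinset.image (· * h) = (H : Set G).toFinite.toFinset := by
  ext x
  simp only [mem_image, Set.Finite.mem_toFinset, SetLike.mem_coe]
  refine ⟨?_, fun hx => ⟨x * h⁻¹, H.mul_mem hx (H.inv_mem hh), inv_mul_cancel_right x h⟩⟩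
  rintro ⟨t, ht, rfl⟩
  exact H.mul_mem ht hh

lemma disjoint_toFinset_image_mul_right_of_notMem (hh : h ∉ H) :
    Disjoint (H : Set G).toFinite.toFinset ((H : Set G).toFinite.toFinset.image (· * h)) := by
  simp only [disjoint_left, mem_image, Set.Finite.mem_toFinset, SetLike.mem_coe, not_exists,
    not_and]
  intro _ hth t ht rfl
  exact hh ((H.mul_mem_cancel_left ht).mp hth)

end Subgroup

/-- For a finite group `G`, a subgroup `H` and `h ∈ G`, the quantity
`‖(|H⟩ − |Hh⟩)/2‖²` equals `0` if `h ∈ H` and `1/2` if `h ∉ H`. -/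
theorem norm_sq_half_sub_uniformSuperposition_coset {G : Type*} [Group G] [Fintype G]
    [DecidableEq G] (H : Subgroup G) (h : G) :
    (h ∈ H →
      ‖(2 : ℂ)⁻¹ • (uniformSuperposition ((H : Set G).toFinite.toFinset)
          - uniformSuperposition (((H : Set G).toFinite.toFinset).image (· * h)))‖ ^ 2
        = 0) ∧
    (h ∉ H →
      ‖(2 : ℂ)⁻¹ • (uniformSuperposition ((H : Set G).toFinite.toFinset)
          - uniformSuperposition (((H : Set G).toFinite.toFinset).image (· * h)))‖ ^ 2
        = 1 / 2) := by
  refine ⟨fun hh => ?_, fun hh => ?_⟩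
  · rw [H.toFinset_image_mul_right_of_mem hh, sub_self, smul_zero, norm_zero]
    norm_num
  · have hH : (H : Set G).toFinite.toFinset.Nonempty := ⟨1, by simp⟩
    rw [norm_smul, mul_pow, norm_sq_uniformSuperposition_sub_of_disjoint hH (hH.image _)
      (H.disjoint_toFinset_image_mul_right_of_notMem hh)]
    norm_num
end

section
/- Let G be a finite group, H a subgroup of G, h ∈ H, ε ≥ 0 a real number, α : H → ℂ a function with | |α_g|² − 1/|H| | ≤ ε for all g ∈ H, and β : G → ℂ with ∑_{x∈G} |β_x|² ≤ 1. Then (1/4)·‖ ∑_{x∈G} ∑_{g∈H} (|α_g|² − |α_{gh⁻¹}|²)·β_x · e_{xg} ‖² ≤ |H|²·ε², where the vector lives in EuclideanSpace ℂ G and (e_y)_{y∈G} is the standard orthonormal basis. (This is the bound on the acceptance probability of the verification procedure on an arbitrary certificate in the case h ∈ H.) -/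
/-!
Each difference `|α g|² − |α (g h⁻¹)|²` is at most `2ε` in absolute value, since both terms are
`ε`-close to `1/|H|`. Grouping the sum by `g ∈ H`, the inner sum over `x` is that coefficient times
the right translate of `β` by `g`, whose norm is `‖β‖ ≤ 1` because `x ↦ x g` is injective and the
vectors `e_y` are orthonormal. The triangle inequality over the `|H|` values of `g` gives
`‖v‖ ≤ 2|H|ε`.
-/

open Finset

theorem Orthonormal.norm_sum_smul_sq {𝕜 E ι : Type*} [RCLike 𝕜] [NormedAddCommGroup E]
    [InnerProductSpace 𝕜 E] {v : ι → E} (hv : Orthonormal 𝕜 v) (c : ι → 𝕜) (s : Finset ι) :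
    ‖∑ i ∈ s, c i • v i‖ ^ 2 = ∑ i ∈ s, ‖c i‖ ^ 2 :=
  hv.orthogonalFamily.norm_sum c s

theorem EuclideanSpace.norm_sum_smul_single_comp_sq {𝕜 ι κ : Type*} [RCLike 𝕜] [Fintype κ]
    [DecidableEq κ] {f : ι → κ} (hf : Function.Injective f) (c : ι → 𝕜) (s : Finset ι) :
    ‖∑ i ∈ s, c i • EuclideanSpace.single (f i) (1 : 𝕜)‖ ^ 2 = ∑ i ∈ s, ‖c i‖ ^ 2 :=
  (EuclideanSpace.orthonormal_single.comp f hf).norm_sum_smul_sq c s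

theorem norm_sum_smul_single_mul_right_le {G : Type*} [Group G] [Fintype G] [DecidableEq G]
    (β : G → ℂ) (hβ : ∑ x : G, ‖β x‖ ^ 2 ≤ 1) (c : ℝ) (g : G) :
    ‖∑ x : G, ((c : ℂ) * β x) • EuclideanSpace.single (x * g) (1 : ℂ)‖ ≤ |c| := by
  have htranslate : ‖∑ x : G, β x • EuclideanSpace.single (x * g) (1 : ℂ)‖ ≤ 1 := by
    rw [← sq_le_one_iff₀ (norm_nonneg _),
      EuclideanSpace.norm_sum_smul_single_comp_sq (mul_left_injective g)]
    exact hβ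
  simp_rw [mul_smul, ← smul_sum, norm_smul, Complex.norm_real, Real.norm_eq_abs]
  exact mul_le_of_le_one_right (abs_nonneg c) htranslate

theorem acceptance_prob_bound_general {G : Type*} [Group G] [Fintype G] [DecidableEq G]
    (H : Subgroup G) [DecidablePred (· ∈ H)] (h : H) (ε : ℝ)
    (α : H → ℂ)
    (hα : ∀ g : H, |‖α g‖ ^ 2 - 1 / (Fintype.card H : ℝ)| ≤ ε)
    (β : G → ℂ) (hβ : ∑ x : G, ‖β x‖ ^ 2 ≤ 1) :
    (1 / 4 : ℝ) *
      ‖∑ x : G, ∑ g : H,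
        (((‖α g‖ ^ 2 - ‖α (g * h⁻¹)‖ ^ 2 : ℝ) : ℂ) * β x) •
          EuclideanSpace.single (x * (g : G)) (1 : ℂ)‖ ^ 2
      ≤ (Fintype.card H : ℝ) ^ 2 * ε ^ 2 := by
  have hcoeff (g : H) : |‖α g‖ ^ 2 - ‖α (g * h⁻¹)‖ ^ 2| ≤ 2 * ε := by
    have := abs_sub_le (‖α g‖ ^ 2) (1 / (Fintype.card H : ℝ)) (‖α (g * h⁻¹)‖ ^ 2)
    rw [abs_sub_comm (1 / _)] at this
    linarith [hα g, hα (g * h⁻¹)]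
  have hnorm : ‖∑ x : G, ∑ g : H,
      (((‖α g‖ ^ 2 - ‖α (g * h⁻¹)‖ ^ 2 : ℝ) : ℂ) * β x) •
        EuclideanSpace.single (x * (g : G)) (1 : ℂ)‖ ≤ Fintype.card H * (2 * ε) := by
    rw [sum_comm]
    refine (norm_sum_le _ _).trans <| (sum_le_sum fun (g : H) _ =>
      (norm_sum_smul_single_mul_right_le β hβ _ (g : G)).trans (hcoeff g)).trans_eq ?_
    rw [sum_const, card_univ, nsmul_eq_mul]
  calc (1 / 4 : ℝ) * ‖_‖ ^ 2 ≤ 1 / 4 * (Fintype.card H * (2 * ε)) ^ 2 := by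
        gcongr
    _ = (Fintype.card H : ℝ) ^ 2 * ε ^ 2 := by ring

/-- Let `G` be a finite group, `H` a subgroup, `h ∈ H`, `ε ≥ 0`,
`α : H → ℂ` with `| |α g|² − 1/|H| | ≤ ε` for all `g ∈ H`, and `β : G → ℂ`
with `∑_x |β x|² ≤ 1`.  Then
`(1/4)‖ ∑_{x ∈ G} ∑_{g ∈ H} (|α g|² − |α (g h⁻¹)|²) β x · e_{xg} ‖² ≤ |H|² ε²`. -/
theorem acceptance_prob_bound {G : Type*} [Group G] [Fintype G] [DecidableEq G]
    (H : Subgroup G) [DecidablePred (· ∈ H)] (h : H) (ε : ℝ) (hε : 0 ≤ ε)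
    (α : H → ℂ)
    (hα : ∀ g : H, |‖α g‖ ^ 2 - 1 / (Fintype.card H : ℝ)| ≤ ε)
    (β : G → ℂ) (hβ : ∑ x : G, ‖β x‖ ^ 2 ≤ 1) :
    (1 / 4 : ℝ) *
      ‖∑ x : G, ∑ g : H,
        (((‖α g‖ ^ 2 - ‖α (g * h⁻¹)‖ ^ 2 : ℝ) : ℂ) * β x) •
          EuclideanSpace.single (x * (g : G)) (1 : ℂ)‖ ^ 2
      ≤ (Fintype.card H : ℝ) ^ 2 * ε ^ 2 :=
  acceptance_prob_bound_general H h ε α hα β hβ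
end
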